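/- arXiv:2403.07133 — 4 statements merged into one kernel-verified Lean document; each statement's English description precedes it below -/
import Mathlib

section
/- For coprime odd integers 0 < q < p, the finite sequence ε_1, ε_2, …, ε_{p-1} with ε_i = (-1)^⌊iq/p⌋ is palindromic: ε_i = ε_{p-i} for all 1 ≤ i ≤ p-1. -/
/-- The sign sequence `ε_i = (-1)^⌊iq/p⌋`, as an integer. -/
noncomputable def eps (p q i : ℤ) : ℤ :=
  (((-1 : ℤˣ) ^ ⌊((i * q : ℤ) : ℚ) / ((p : ℤ) : ℚ)⌋ : ℤˣ) : ℤ)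

theorem eps_palindromic (p q : ℤ) (hq : 0 < q) (hqp : q < p) (hp : Odd p) (hoq : Odd q)
    (hcop : IsCoprime p q) (i : ℤ) (h1 : 1 ≤ i) (h2 : i ≤ p - 1) :
    eps p q i = eps p q (p - i) := by
  have hp0 : (0:ℤ) < p := lt_trans hq hqp
  have hpQ : ((p:ℚ)) ≠ 0 := by exact_mod_cast hp0.ne'
  -- iq/p is not an integer
  have hndvd : ¬ (p ∣ i * q) := by
    intro hdvd
    have hpi : p ∣ i := (IsCoprime.dvd_of_dvd_mul_right hcop) hdvd
    rcases hpi with ⟨k, hk⟩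
    have hk1 : 1 ≤ k := by nlinarith
    nlinarith
  set x : ℚ := ((i * q : ℤ) : ℚ) / ((p : ℤ) : ℚ) with hx
  have hfrac : ∀ m : ℤ, x ≠ (m : ℚ) := by
    intro m hm
    apply hndvd
    refine ⟨m, ?_⟩
    rw [hx, div_eq_iff hpQ] at hm
    have : (i * q : ℚ) = ((p * m : ℤ) : ℚ) := by push_cast at hm ⊢; linarith
    exact_mod_cast this
  have hfz : Int.fract x ≠ 0 :=
    (Int.fract_pos.mpr (fun h => hfrac ⌊x⌋ h)).ne'
  have hceil : (⌈x⌉ : ℤ) = ⌊x⌋ + 1 := by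
    have h := Int.ceil_eq_add_one_sub_fract hfz
    rw [← Int.self_sub_floor] at h
    have : (⌈x⌉ : ℚ) = ((⌊x⌋ + 1 : ℤ) : ℚ) := by push_cast; linarith
    exact_mod_cast this
  -- compute the floor for p - i
  have hval : (((p - i) * q : ℤ) : ℚ) / ((p : ℤ) : ℚ) = (q : ℚ) - x := by
    rw [hx]
    field_simp
    push_cast
    ring
  have hfloor : ⌊(((p - i) * q : ℤ) : ℚ) / ((p : ℤ) : ℚ)⌋ = q - ⌊x⌋ - 1 := by
    rw [hval, sub_eq_add_neg, Int.floor_intCast_add, Int.floor_neg, hceil]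
    ring
  -- conclude via parity
  unfold eps
  rw [hfloor]
  congr 1
  have heven : Even (q - ⌊x⌋ - 1 - ⌊x⌋) := by
    rcases hoq with ⟨k, hk⟩
    exact ⟨k - ⌊x⌋, by omega⟩
  calc (-1 : ℤˣ) ^ ⌊x⌋ = (-1 : ℤˣ) ^ ⌊x⌋ * (-1 : ℤˣ) ^ (q - ⌊x⌋ - 1 - ⌊x⌋) := by
        rw [Even.neg_one_zpow heven, mul_one]
    _ = (-1 : ℤˣ) ^ (q - ⌊x⌋ - 1) := by
        rw [← zpow_add]; congr 1; ring
end

section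
/- For coprime odd integers 0 < q < p, let ℓ be the unique integer with 0 < ℓ < 2p and ℓq ≡ -1 (mod 2p), and let ε_i = (-1)^⌊iq/p⌋. Then for every integer i not divisible by p, ε_{ℓ+i} = ε_i, and for every integer i divisible by p, ε_{ℓ+i} = -ε_i. -/
lemma eps_eq (p q i : ℤ) (hp : 0 < p) :
    eps p q i = (((-1 : ℤˣ) ^ (i * q / p) : ℤˣ) : ℤ) := by
  unfold eps
  congr 2
  have hpn : ((p.toNat : ℕ) : ℚ) = ((p : ℤ) : ℚ) := by
    rw [← Int.cast_natCast, Int.toNat_of_nonneg hp.le]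
  rw [← hpn, Rat.floor_intCast_div_natCast, Int.toNat_of_nonneg hp.le]

lemma ediv_sub_one_of_not_dvd {p a : ℤ} (hp : 0 < p) (h : ¬ p ∣ a) :
    (a - 1) / p = a / p := by
  have h1 : a % p ≠ 0 := fun hh => h (Int.dvd_of_emod_eq_zero hh)
  have h2 : 0 ≤ a % p := Int.emod_nonneg a hp.ne'
  have h3 : a % p < p := Int.emod_lt_of_pos a hp
  have h4 : a = p * (a / p) + a % p := (Int.mul_ediv_add_emod a p).symm
  rw [mul_comm] at h4
  have : a - 1 = (a % p - 1) + (a / p) * p := by omega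
  rw [this, Int.add_mul_ediv_right _ _ hp.ne',
    Int.ediv_eq_zero_of_lt (by omega) (by omega)]
  omega

lemma ediv_sub_one_of_dvd {p a : ℤ} (hp : 0 < p) (h : p ∣ a) :
    (a - 1) / p = a / p - 1 := by
  obtain ⟨c, rfl⟩ := h
  have : p * c - 1 = (p - 1) + (c - 1) * p := by ring
  rw [this, Int.add_mul_ediv_right _ _ hp.ne', Int.mul_ediv_cancel_left _ hp.ne',
    Int.ediv_eq_zero_of_lt (by omega) (by omega)]
  omega

theorem eps_shift_ell (p q ℓ : ℤ) (hq : 0 < q) (hqp : q < p) (hp : Odd p) (hoq : Odd q)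
    (hcop : IsCoprime p q) (hl0 : 0 < ℓ) (hl2p : ℓ < 2 * p)
    (hl : ℓ * q ≡ -1 [ZMOD (2 * p)]) :
    (∀ i : ℤ, ¬ (p ∣ i) → eps p q (ℓ + i) = eps p q i) ∧
    (∀ i : ℤ, p ∣ i → eps p q (ℓ + i) = - eps p q i) := by
  have hp0 : 0 < p := hq.trans hqp
  obtain ⟨k, hk⟩ : (2 * p) ∣ (ℓ * q - (-1)) := Int.ModEq.dvd hl.symm
  -- ℓ * q = 2 * p * k - 1
  have hlq : ℓ * q = 2 * p * k - 1 := by omega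
  have key : ∀ i : ℤ, (ℓ + i) * q / p = (i * q - 1) / p + 2 * k := by
    intro i
    have : (ℓ + i) * q = (i * q - 1) + 2 * k * p := by rw [add_mul, hlq]; ring
    rw [this, Int.add_mul_ediv_right _ _ hp0.ne']
  have hpow : ∀ m : ℤ, ((-1 : ℤˣ) ^ (m + 2 * k)) = (-1 : ℤˣ) ^ m := by
    intro m
    rw [zpow_add, two_mul, zpow_add, ← mul_zpow]
    norm_num
  constructor
  · intro i hi
    have hdvd : ¬ p ∣ i * q := fun h => hi ((hcop.dvd_of_dvd_mul_right h))
    rw [eps_eq _ _ _ hp0, eps_eq _ _ _ hp0, key i,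
      ediv_sub_one_of_not_dvd hp0 hdvd, hpow]
  · intro i hi
    have hdvd : p ∣ i * q := hi.mul_right q
    rw [eps_eq _ _ _ hp0, eps_eq _ _ _ hp0, key i,
      ediv_sub_one_of_dvd hp0 hdvd, hpow, sub_eq_add_neg, zpow_add]
    simp
end

section
/- In the free group F on two generators u, v, let w be any word and set r = w u w⁻¹ v⁻¹ and l = w* w, where w* denotes the word w written in reverse. Suppose moreover that u w* v⁻¹ (w*)⁻¹ = g r g⁻¹ for some g ∈ F. Then the commutator identity [l, u] = [w*, r]·[r, g] holds in F, where [a,b] = a b a⁻¹ b⁻¹. -/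
open scoped commutatorElement

theorem commutatorElement_mul_eq_of_conj_eq {G : Type*} [Group G] {u v w s g r : G}
    (hr : r = w * u * w⁻¹ * v⁻¹) (hconj : u * s * v⁻¹ * s⁻¹ = g * r * g⁻¹) :
    ⁅s * w, u⁆ = ⁅s, r⁆ * ⁅r, g⁆ :=
  calc ⁅s * w, u⁆ = s * r * s⁻¹ * (u * s * v⁻¹ * s⁻¹)⁻¹ := by
        rw [hr, commutatorElement_def]; group
    _ = s * r * s⁻¹ * (g * r * g⁻¹)⁻¹ := by rw [hconj]
    _ = ⁅s, r⁆ * ⁅r, g⁆ := by simp only [commutatorElement_def]; group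

theorem commutator_identity_general (u v w wstar g r l : FreeGroup Bool)
    (hr : r = w * u * w⁻¹ * v⁻¹) (hl : l = wstar * w)
    (hconj : u * wstar * v⁻¹ * wstar⁻¹ = g * r * g⁻¹) :
    ⁅l, u⁆ = ⁅wstar, r⁆ * ⁅r, g⁆ := by
  subst hl
  exact commutatorElement_mul_eq_of_conj_eq hr hconj

theorem commutator_identity (u v w wstar g r l : FreeGroup Bool)
    (hu : u = FreeGroup.of false) (hv : v = FreeGroup.of true)
    (hr : r = w * u * w⁻¹ * v⁻¹) (hl : l = wstar * w)
    (hconj : u * wstar * v⁻¹ * wstar⁻¹ = g * r * g⁻¹) :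
    ⁅l, u⁆ = ⁅wstar, r⁆ * ⁅r, g⁆ :=
  commutator_identity_general u v w wstar g r l hr hl hconj
end

section
/- Let p, q be coprime odd integers with 0 < q < p, ε_i = (-1)^⌊iq/p⌋, and let u = [[1,x],[0,1]], v = [[1,0],[x,1]] in SL_2(ℂ) for some x ∈ ℂ. Set w = u^{ε_1} v^{ε_2} ⋯ u^{ε_{p-2}} v^{ε_{p-1}}. If the Möbius transformation w satisfies w(∞) = 0, then wu = ±vw in PSL_2(ℂ), i.e., wu = vw or wu = -vw in SL_2(ℂ). -/
open OnePoint

/-- Möbius action of a `2 × 2` complex matrix on `ℙ¹(ℂ) = ℂ ∪ {∞}`. -/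
noncomputable def mobius (M : Matrix (Fin 2) (Fin 2) ℂ) : OnePoint ℂ → OnePoint ℂ :=
  fun z =>
    match z with
    | Option.none => if M 1 0 = 0 then ∞ else ((M 0 0 / M 1 0 : ℂ) : OnePoint ℂ)
    | Option.some w =>
        if M 1 0 * w + M 1 1 = 0 then ∞
        else (((M 0 0 * w + M 0 1) / (M 1 0 * w + M 1 1) : ℂ) : OnePoint ℂ)

/-- `u = [[1,x],[0,1]]` as an element of `SL₂(ℂ)`. -/
noncomputable def U (x : ℂ) : Matrix.SpecialLinearGroup (Fin 2) ℂ :=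
  ⟨!![1, x; 0, 1], by simp [Matrix.det_fin_two_of]⟩

/-- `v = [[1,0],[x,1]]` as an element of `SL₂(ℂ)`. -/
noncomputable def V (x : ℂ) : Matrix.SpecialLinearGroup (Fin 2) ℂ :=
  ⟨!![1, 0; x, 1], by simp [Matrix.det_fin_two_of]⟩

/-- The word `w = u^{ε₁} v^{ε₂} ⋯ u^{ε_{p-2}} v^{ε_{p-1}}`. -/
noncomputable def wWord (p q : ℕ) (x : ℂ) : Matrix.SpecialLinearGroup (Fin 2) ℂ :=
  ((List.range ((p - 1) / 2)).map
    (fun j => U x ^ eps p q (2 * j + 1) * V x ^ eps p q (2 * j + 2))).prod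

/-!
Transposition is an anti-automorphism of `SL₂(ℂ)` exchanging `u` and `v`, and `ε_{p-i} = ε_i`
since `⌊(p-i)q/p⌋ = q - 1 - ⌊iq/p⌋` for `p ∤ iq`, with `q` odd. Reading the word backwards thus
shows `wᵀ = w`. A symmetric `w` with `w(∞) = 0` has the shape `[[0, b], [b, d]]`, and for such a
matrix `wu = vw` is a direct computation.
-/

namespace Matrix.SpecialLinearGroup

variable {n R : Type*} [Fintype n] [DecidableEq n] [CommRing R]

def transposeAntiHom : SpecialLinearGroup n R →* (SpecialLinearGroup n R)ᵐᵒᵖ where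
  toFun A := MulOpposite.op A.transpose
  map_one' := MulOpposite.unop_injective <| Subtype.ext transpose_one
  map_mul' A B := MulOpposite.unop_injective <| Subtype.ext <|
    Matrix.transpose_mul (A : Matrix n n R) (B : Matrix n n R)

@[simp]
lemma transposeAntiHom_apply (A : SpecialLinearGroup n R) :
    transposeAntiHom A = MulOpposite.op A.transpose :=
  rfl

lemma transpose_mul (A B : SpecialLinearGroup n R) :
    (A * B).transpose = B.transpose * A.transpose :=
  congrArg MulOpposite.unop (map_mul transposeAntiHom A B)

lemma transpose_zpow (A : SpecialLinearGroup n R) (k : ℤ) :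
    (A ^ k).transpose = A.transpose ^ k := by
  simpa using congrArg MulOpposite.unop (map_zpow transposeAntiHom A k)

lemma transpose_list_prod (l : List (SpecialLinearGroup n R)) :
    l.prod.transpose = (l.map transpose).reverse.prod := by
  simpa [Function.comp_def] using unop_map_list_prod transposeAntiHom l

end Matrix.SpecialLinearGroup

lemma U_transpose (x : ℂ) : (U x).transpose = V x := by
  ext i j; fin_cases i <;> fin_cases j <;> rfl

lemma V_transpose (x : ℂ) : (V x).transpose = U x := by
  ext i j; fin_cases i <;> fin_cases j <;> rfl

lemma eps_eq_negOnePow_ediv (p : ℕ) (q i : ℤ) : eps p q i = (i * q / p).negOnePow := by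
  rw [eps, Int.negOnePow_def, ← Rat.floor_intCast_div_natCast]
  norm_cast

lemma eps_self_sub {p : ℕ} {q : ℤ} (hq : Odd q) (hpq : IsCoprime (p : ℤ) q) {i : ℤ}
    (hi : 0 < i) (hip : i < p) : eps p q (p - i) = eps p q i := by
  have hp : (p : ℤ) ≠ 0 := by omega
  have hndvd : ¬ (p : ℤ) ∣ i * q := fun h =>
    absurd (Int.le_of_dvd hi (hpq.dvd_of_dvd_mul_right h)) (by omega)
  have hfloor : (p - i) * q / p = q - 1 - i * q / p := by
    rw [show (p - i) * q = -(i * q) + p * q by ring, Int.add_mul_ediv_left _ _ hp, Int.neg_ediv,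
      if_neg hndvd, Int.sign_natCast_of_ne_zero (by omega)]
    ring
  obtain ⟨k, rfl⟩ := hq
  rw [eps_eq_negOnePow_ediv, eps_eq_negOnePow_ediv, hfloor]
  congr 1
  rw [Int.negOnePow_eq_iff]
  exact ⟨k - i * (2 * k + 1) / p, by ring⟩

-- The `do` block in `wWord` is `List.range` cast to `ℤ`.
lemma wWord_eq_prod_range (p q : ℕ) (x : ℂ) :
    wWord p q x = ((List.range ((p - 1) / 2)).map
      (fun j : ℕ => U x ^ eps p q (2 * j + 1) * V x ^ eps p q (2 * j + 2))).prod := by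
  simp only [wWord, List.pure_def, List.bind_eq_flatMap, ← List.map_eq_flatMap, List.map_map]
  rfl

open Matrix.SpecialLinearGroup in
lemma wWord_transpose {p q : ℕ} (hp : Odd p) (hq : Odd q) (hpq : p.Coprime q) (x : ℂ) :
    (wWord p q x).transpose = wWord p q x := by
  obtain ⟨L, rfl⟩ := hp
  have hL : (2 * L + 1 - 1) / 2 = L := by omega
  rw [wWord_eq_prod_range, hL, transpose_list_prod, List.map_map, ← List.map_reverse,
    List.range_eq_range', List.reverse_range', List.map_map, ← List.range_eq_range']
  refine congrArg List.prod (List.map_congr_left fun j hj => ?_)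
  have hj : j < L := by simpa using hj
  have hpq' : IsCoprime ((2 * L + 1 : ℕ) : ℤ) q := Nat.isCoprime_iff_coprime.2 hpq
  have hodd : Odd (q : ℤ) := by exact_mod_cast hq
  have h1 : eps (2 * L + 1 : ℕ) q (2 * (L - 1 - j : ℕ) + 1) =
      eps (2 * L + 1 : ℕ) q (2 * j + 2) := by
    rw [← eps_self_sub hodd hpq' (i := 2 * j + 2) (by omega) (by omega)]
    congr 1; push_cast; omega
  have h2 : eps (2 * L + 1 : ℕ) q (2 * (L - 1 - j : ℕ) + 2) =
      eps (2 * L + 1 : ℕ) q (2 * j + 1) := by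
    rw [← eps_self_sub hodd hpq' (i := 2 * j + 1) (by omega) (by omega)]
    congr 1; push_cast; omega
  simp only [Function.comp_apply, zero_add, transpose_mul, transpose_zpow, U_transpose,
    V_transpose, h1, h2]

lemma mobius_infty_eq_zero_iff (M : Matrix (Fin 2) (Fin 2) ℂ) :
    mobius M ∞ = ((0 : ℂ) : OnePoint ℂ) ↔ M 0 0 = 0 ∧ M 1 0 ≠ 0 := by
  by_cases h : M 1 0 = 0 <;> simp [mobius, h]

lemma mul_U_eq_V_mul_of_transpose_eq {W : Matrix.SpecialLinearGroup (Fin 2) ℂ}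
    (hW : W.transpose = W) (h00 : W 0 0 = 0) (x : ℂ) : W * U x = V x * W := by
  have h10 : W 1 0 = W 0 1 := congrFun (congrFun (congrArg Subtype.val hW) 0) 1
  refine Subtype.ext ?_
  rw [Matrix.SpecialLinearGroup.coe_mul, Matrix.SpecialLinearGroup.coe_mul,
    Matrix.eta_fin_two (W : Matrix (Fin 2) (Fin 2) ℂ), h00, h10]
  simp only [U, V, Matrix.mul_fin_two]
  ring_nf

theorem w_intertwines_general (p q : ℕ) (hp : Odd p) (hoq : Odd q)
    (hcop : Nat.Coprime p q) (x : ℂ)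
    (hw : mobius ((wWord p q x : Matrix (Fin 2) (Fin 2) ℂ)) ∞ = ((0 : ℂ) : OnePoint ℂ)) :
    ((wWord p q x * U x : Matrix.SpecialLinearGroup (Fin 2) ℂ) : Matrix (Fin 2) (Fin 2) ℂ) =
        ((V x * wWord p q x : Matrix.SpecialLinearGroup (Fin 2) ℂ) : Matrix (Fin 2) (Fin 2) ℂ) ∨
    ((wWord p q x * U x : Matrix.SpecialLinearGroup (Fin 2) ℂ) : Matrix (Fin 2) (Fin 2) ℂ) =
        -((V x * wWord p q x : Matrix.SpecialLinearGroup (Fin 2) ℂ) : Matrix (Fin 2) (Fin 2) ℂ) :=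
  Or.inl <| congrArg Subtype.val <|
    mul_U_eq_V_mul_of_transpose_eq (wWord_transpose hp hoq hcop x)
      ((mobius_infty_eq_zero_iff _).1 hw).1 x

theorem w_intertwines (p q : ℕ) (hq : 0 < q) (hqp : q < p) (hp : Odd p) (hoq : Odd q)
    (hcop : Nat.Coprime p q) (x : ℂ)
    (hw : mobius ((wWord p q x : Matrix (Fin 2) (Fin 2) ℂ)) ∞ = ((0 : ℂ) : OnePoint ℂ)) :
    ((wWord p q x * U x : Matrix.SpecialLinearGroup (Fin 2) ℂ) : Matrix (Fin 2) (Fin 2) ℂ) =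
        ((V x * wWord p q x : Matrix.SpecialLinearGroup (Fin 2) ℂ) : Matrix (Fin 2) (Fin 2) ℂ) ∨
    ((wWord p q x * U x : Matrix.SpecialLinearGroup (Fin 2) ℂ) : Matrix (Fin 2) (Fin 2) ℂ) =
        -((V x * wWord p q x : Matrix.SpecialLinearGroup (Fin 2) ℂ) : Matrix (Fin 2) (Fin 2) ℂ) :=
  w_intertwines_general p q hp hoq hcop x hw
end
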